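/- For all real intervals J₁ and J₂ with J₁ ∩ J₂ = ∅, the operators on the Fock space 𝓕 satisfy E_{J₁} ∘ F_{J₂} = F_{J₂} ∘ E_{J₁} as K-linear endomorphisms of 𝓕. -/

import Mathlib

noncomputable section
open Function
open scoped Classical

/-- The `ℕ`-valued indicator function of the interval `[a, b)`. -/
def ind (a b : ℝ) : ℝ → ℕ := (Set.Ico a b).indicator fun _ => 1

/-- A real pyramid: a function `p : ℝ → ℕ` vanishing outside a bounded set, maximal at `0`,
nondecreasing on `(-∞, 0]`, nonincreasing on `[0, ∞)`, right-continuous and piecewise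
constant with finitely many discontinuities, and with jumps of size at most 1
(`p₋(x)` is the left limit of `p` at `x`). -/
def IsRealPyramid (p : ℝ → ℕ) : Prop :=
  (∃ M : ℝ, ∀ x : ℝ, M ≤ |x| → p x = 0) ∧
  (∀ x, p x ≤ p 0) ∧
  (∀ ⦃x y : ℝ⦄, x ≤ y → y ≤ 0 → p x ≤ p y) ∧
  (∀ ⦃x y : ℝ⦄, 0 ≤ x → x ≤ y → p y ≤ p x) ∧
  (∀ x, ContinuousWithinAt p (Set.Ici x) x) ∧
  {x : ℝ | ¬ ContinuousAt p x}.Finite ∧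
  (∀ x, |(p x : ℤ) - ((Function.leftLim p x : ℕ) : ℤ)| ≤ 1)

/-- The interval `[a, b)` is addable for `p` if `p + 1_{[a,b)}` is again a real pyramid. -/
def Addable (p : ℝ → ℕ) (a b : ℝ) : Prop := IsRealPyramid (fun x => p x + ind a b x)

/-- The interval `[a, b)` is removable for `p` if `p ≥ 1` on `[a, b)` and `p − 1_{[a,b)}`
is again a real pyramid. -/
def Removable (p : ℝ → ℕ) (a b : ℝ) : Prop :=
  (∀ x ∈ Set.Ico a b, 1 ≤ p x) ∧ IsRealPyramid (fun x => p x - ind a b x)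

/-- `n_J(p)`: `1` if `J = [a,b)` is addable for `p`, `−1` if removable, `0` otherwise. -/
def nJ (p : ℝ → ℕ) (a b : ℝ) : ℤ :=
  if Addable p a b then 1 else if Removable p a b then -1 else 0

/-- The base field `K = ℚ(t)`. -/
abbrev K : Type := RatFunc ℚ

/-- The variable `t ∈ K` (playing the role of `υ^{1/2}`). -/
def tK : K := RatFunc.X

/-- The quantum parameter `v := t²`. -/
def vK : K := tK ^ 2

/-- The type of real pyramids. -/
def Pyr : Type := {p : ℝ → ℕ // IsRealPyramid p}

/-- The Fock space: the `K`-vector space with basis `|p⟩` indexed by real pyramids. -/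
abbrev Fock : Type := Pyr →₀ K

/-- `E_J |p⟩ = −t·(−v)^{p(b)−p(a)} |p − 1_J⟩` if `J = [a,b)` is removable for `p`,
and `0` otherwise. -/
def Evec (a b : ℝ) (p : Pyr) : Fock :=
  if h : Removable p.1 a b then
    Finsupp.single ⟨fun x => p.1 x - ind a b x, h.2⟩
      (-tK * (-vK) ^ ((p.1 b : ℤ) - (p.1 a : ℤ)))
  else 0

/-- `F_J |p⟩ = t·(−v)^{p(a)−p(b)} |p + 1_J⟩` if `J = [a,b)` is addable for `p`,
and `0` otherwise. -/
def Fvec (a b : ℝ) (p : Pyr) : Fock :=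
  if h : Addable p.1 a b then
    Finsupp.single ⟨fun x => p.1 x + ind a b x, h⟩
      (tK * (-vK) ^ ((p.1 a : ℤ) - (p.1 b : ℤ)))
  else 0

/-- The `K`-linear operator `E_J` on the Fock space. -/
def Eop (a b : ℝ) : Fock →ₗ[K] Fock :=
  Finsupp.lsum K fun p => LinearMap.toSpanSingleton K Fock (Evec a b p)

/-- The `K`-linear operator `F_J` on the Fock space. -/
def Fop (a b : ℝ) : Fock →ₗ[K] Fock :=
  Finsupp.lsum K fun p => LinearMap.toSpanSingleton K Fock (Fvec a b p)

/-- The `K`-linear operator `K_J` on the Fock space: `K_J |p⟩ = v^{n_J(p)} |p⟩`. -/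
def Kop (a b : ℝ) : Fock →ₗ[K] Fock :=
  Finsupp.lsum K fun p =>
    LinearMap.toSpanSingleton K Fock (Finsupp.single p (vK ^ (nJ p.1 a b)))

/-- The `K`-linear operator `K_J⁻¹` on the Fock space: `K_J⁻¹ |p⟩ = v^{−n_J(p)} |p⟩`. -/
def Kinvop (a b : ℝ) : Fock →ₗ[K] Fock :=
  Finsupp.lsum K fun p =>
    LinearMap.toSpanSingleton K Fock (Finsupp.single p (vK ^ (-nJ p.1 a b)))

/-!
The commutation is checked on basis vectors. With `q := p + 1_{J₂} - 1_{J₁}`, both `E_{J₁} F_{J₂} |p⟩`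
and `F_{J₂} E_{J₁} |p⟩` are nonzero exactly when `p ≥ 1` on `J₁` and `q` is a real pyramid: the two
intermediate functions `p + 1_{J₂}` and `p - 1_{J₁}` are `max p q` and `min p q`, and real pyramids are
closed under pointwise `max` and `min`. The two coefficients agree unless the intervals touch, and
then both vectors vanish: at the common endpoint the jump of `q` would differ from that of `p` by `2`,
whereas the jumps of two real pyramids at the same point differ by at most `1`.
-/

open Filter Topology

lemma ind_eq_zero_or_ind_eq_zero {a₁ b₁ a₂ b₂ : ℝ} (hdisj : Set.Ico a₁ b₁ ∩ Set.Ico a₂ b₂ = ∅)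
    (x : ℝ) : ind a₁ b₁ x = 0 ∨ ind a₂ b₂ x = 0 := by
  by_cases hx₁ : x ∈ Set.Ico a₁ b₁
  · exact Or.inr <| Set.indicator_of_notMem
      (fun hx₂ => Set.eq_empty_iff_forall_notMem.1 hdisj x ⟨hx₁, hx₂⟩) _
  · exact Or.inl (Set.indicator_of_notMem hx₁ _)

lemma ind_eq_zero_of_separated {a₁ b₁ a₂ b₂ x : ℝ} (hsep : b₁ < a₂ ∨ b₂ < a₁)
    (hx : x ∈ Set.Icc a₁ b₁) : ind a₂ b₂ x = 0 :=
  Set.indicator_of_notMem (fun h => by rcases hsep with hs | hs <;> linarith [hx.1, hx.2, h.1, h.2]) _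

lemma le_or_le_of_Ico_inter_Ico_eq_empty {a₁ b₁ a₂ b₂ : ℝ} (h₁ : a₁ < b₁) (h₂ : a₂ < b₂)
    (hdisj : Set.Ico a₁ b₁ ∩ Set.Ico a₂ b₂ = ∅) : b₁ ≤ a₂ ∨ b₂ ≤ a₁ := by
  have h := Set.Ico_disjoint_Ico.1 (Set.disjoint_iff_inter_eq_empty.2 hdisj)
  rw [min_le_iff, le_max_iff, le_max_iff] at h
  rcases h with (h | h) | (h | h)
  exacts [absurd h h₁.not_ge, Or.inl h, Or.inr h, absurd h h₂.not_ge]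

lemma ind_self_left {a b : ℝ} (h : a < b) : ind a b a = 1 :=
  Set.indicator_of_mem (Set.left_mem_Ico.2 h) _

lemma ind_self_right (a b : ℝ) : ind a b b = 0 :=
  Set.indicator_of_notMem Set.right_notMem_Ico _

lemma eventually_ind_eq_one_left {a b : ℝ} (h : a < b) : ∀ᶠ x in 𝓝[<] b, ind a b x = 1 :=
  mem_of_superset (Ioo_mem_nhdsLT h) fun _ hx => Set.indicator_of_mem (Set.Ioo_subset_Ico_self hx) _

lemma eventually_ind_eq_zero_left (a b : ℝ) : ∀ᶠ x in 𝓝[<] a, ind a b x = 0 :=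
  mem_of_superset self_mem_nhdsWithin fun _ hx => Set.indicator_of_notMem (fun h => not_le.2 hx h.1) _

lemma leftLim_eq_of_eventually_eq {β : Type*} [TopologicalSpace β] [T2Space β] {f : ℝ → β}
    {x : ℝ} {y : β} (h : ∀ᶠ z in 𝓝[<] x, f z = y) : Function.leftLim f x = y :=
  leftLim_eq_of_tendsto (tendsto_const_nhds.congr' (h.mono fun _ hz => hz.symm))

lemma eventually_eq_leftLim_of_finite {β : Type*} [TopologicalSpace β] [DiscreteTopology β]
    {f : ℝ → β} (hf : {x | ¬ ContinuousAt f x}.Finite) (x : ℝ) :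
    ∀ᶠ z in 𝓝[<] x, f z = Function.leftLim f x := by
  obtain ⟨c, hcx, hc⟩ := exists_Ioc_subset_of_mem_nhds (a := x)
    ((hf.sdiff (t := {x})).isClosed.isOpen_compl.mem_nhds (by simp)) ⟨x - 1, by linarith⟩
  have hcont : ContinuousOn f (Set.Ioo c x) := fun z hz => by
    have hz' := hc (Set.Ioo_subset_Ioc_self hz)
    simp only [Set.mem_compl_iff, Set.mem_sdiff, Set.mem_ofPred_eq, Set.mem_singleton_iff,
      not_and, not_not] at hz'
    exact (not_not.1 (mt hz' hz.2.ne)).continuousWithinAt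
  have hm : (c + x) / 2 ∈ Set.Ioo c x := ⟨by linarith, by linarith⟩
  have hconst : ∀ᶠ z in 𝓝[<] x, f z = f ((c + x) / 2) :=
    mem_of_superset (Ioo_mem_nhdsLT hcx) fun _ hz => isPreconnected_Ioo.constant hcont hz hm
  rwa [leftLim_eq_of_eventually_eq hconst]

def jump (f : ℝ → ℕ) (x : ℝ) : ℤ := f x - Function.leftLim f x

namespace IsRealPyramid

variable {p q : ℝ → ℕ}

lemma eventually_eq_leftLim (hp : IsRealPyramid p) (x : ℝ) :
    ∀ᶠ z in 𝓝[<] x, p z = Function.leftLim p x :=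
  eventually_eq_leftLim_of_finite hp.2.2.2.2.2.1 x

lemma leftLim_le_of_nonpos (hp : IsRealPyramid p) {x : ℝ} (hx : x ≤ 0) :
    Function.leftLim p x ≤ p x := by
  obtain ⟨z, hz, hzx⟩ := ((hp.eventually_eq_leftLim x).and self_mem_nhdsWithin).exists
  exact hz ▸ hp.2.2.1 (le_of_lt hzx) hx

lemma le_leftLim_of_pos (hp : IsRealPyramid p) {x : ℝ} (hx : 0 < x) :
    p x ≤ Function.leftLim p x := by
  obtain ⟨z, hz, hzx⟩ := ((hp.eventually_eq_leftLim x).and (Ioo_mem_nhdsLT hx)).exists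
  exact hz ▸ hp.2.2.2.1 hzx.1.le hzx.2.le

/-- Both jumps lie in `[0, 1]` when `x ≤ 0` and in `[-1, 0]` when `0 < x`. -/
lemma abs_jump_sub_jump_le_one (hp : IsRealPyramid p) (hq : IsRealPyramid q) (x : ℝ) :
    |jump p x - jump q x| ≤ 1 := by
  have hpx := hp.2.2.2.2.2.2 x
  have hqx := hq.2.2.2.2.2.2 x
  unfold jump
  rw [abs_le] at hpx hqx ⊢
  rcases le_or_gt x 0 with hx | hx
  · have := hp.leftLim_le_of_nonpos hx
    have := hq.leftLim_le_of_nonpos hx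
    omega
  · have := hp.le_leftLim_of_pos hx
    have := hq.le_leftLim_of_pos hx
    omega

lemma comp₂ (hp : IsRealPyramid p) (hq : IsRealPyramid q) {op : ℕ → ℕ → ℕ}
    (hmono : ∀ ⦃a b c d⦄, a ≤ c → b ≤ d → op a b ≤ op c d) (hzero : op 0 0 = 0)
    (hlip : ∀ a b c d : ℕ, |(op a b : ℤ) - op c d| ≤ max |(a : ℤ) - c| |(b : ℤ) - d|) :
    IsRealPyramid fun x => op (p x) (q x) := by
  obtain ⟨⟨M, hM⟩, hp0, hpl, hpr, hpc, hpf, hpj⟩ := hp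
  obtain ⟨⟨N, hN⟩, hq0, hql, hqr, hqc, hqf, hqj⟩ := hq
  have hop : Continuous fun z : ℕ × ℕ => op z.1 z.2 := continuous_of_discreteTopology
  have hleft : ∀ x, Function.leftLim (fun x => op (p x) (q x)) x =
      op (Function.leftLim p x) (Function.leftLim q x) := fun x =>
    leftLim_eq_of_eventually_eq <| ((eventually_eq_leftLim_of_finite hpf x).and
      (eventually_eq_leftLim_of_finite hqf x)).mono fun z hz => by rw [hz.1, hz.2]
  refine ⟨⟨max M N, fun x hx => ?_⟩, fun x => hmono (hp0 x) (hq0 x),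
    fun x y hxy hy => hmono (hpl hxy hy) (hql hxy hy),
    fun x y hx hxy => hmono (hpr hx hxy) (hqr hx hxy),
    fun x => hop.continuousAt.comp_continuousWithinAt ((hpc x).prodMk (hqc x)),
    (hpf.union hqf).subset fun x hx => ?_, fun x => ?_⟩
  · show op (p x) (q x) = 0
    rw [hM x (le_of_max_le_left hx), hN x (le_of_max_le_right hx), hzero]
  · by_contra h
    simp only [Set.mem_union, Set.mem_ofPred_eq, not_or, not_not] at h
    exact hx (hop.continuousAt.comp (h.1.prodMk h.2))
  · rw [hleft]
    exact (hlip _ _ _ _).trans (max_le (hpj x) (hqj x))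

protected lemma max (hp : IsRealPyramid p) (hq : IsRealPyramid q) :
    IsRealPyramid fun x => max (p x) (q x) :=
  hp.comp₂ hq (fun _ _ _ _ => max_le_max) rfl fun _ _ _ _ => by
    push_cast
    exact abs_max_sub_max_le_max _ _ _ _

protected lemma min (hp : IsRealPyramid p) (hq : IsRealPyramid q) :
    IsRealPyramid fun x => min (p x) (q x) :=
  hp.comp₂ hq (fun _ _ _ _ => min_le_min) rfl fun _ _ _ _ => by
    push_cast
    exact abs_min_sub_min_le_max _ _ _ _

end IsRealPyramid

section DisjointIntervals

variable {p : ℝ → ℕ} {a₁ b₁ a₂ b₂ : ℝ}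

lemma tsub_ind_add_ind (hdisj : Set.Ico a₁ b₁ ∩ Set.Ico a₂ b₂ = ∅) :
    (fun x => p x - ind a₁ b₁ x + ind a₂ b₂ x) = fun x => p x + ind a₂ b₂ x - ind a₁ b₁ x :=
  funext fun x => by have := ind_eq_zero_or_ind_eq_zero hdisj x; omega

lemma max_add_ind_tsub_ind (hdisj : Set.Ico a₁ b₁ ∩ Set.Ico a₂ b₂ = ∅) :
    (fun x => max (p x) (p x + ind a₂ b₂ x - ind a₁ b₁ x)) = fun x => p x + ind a₂ b₂ x :=
  funext fun x => by have := ind_eq_zero_or_ind_eq_zero hdisj x; omega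

lemma min_add_ind_tsub_ind (hdisj : Set.Ico a₁ b₁ ∩ Set.Ico a₂ b₂ = ∅) :
    (fun x => min (p x) (p x + ind a₂ b₂ x - ind a₁ b₁ x)) = fun x => p x - ind a₁ b₁ x :=
  funext fun x => by have := ind_eq_zero_or_ind_eq_zero hdisj x; omega

lemma addable_and_removable_iff (hp : IsRealPyramid p)
    (hdisj : Set.Ico a₁ b₁ ∩ Set.Ico a₂ b₂ = ∅) :
    Addable p a₂ b₂ ∧ Removable (fun x => p x + ind a₂ b₂ x) a₁ b₁ ↔
      (∀ x ∈ Set.Ico a₁ b₁, 1 ≤ p x) ∧ IsRealPyramid fun x => p x + ind a₂ b₂ x - ind a₁ b₁ x := by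
  have hJ₁ : ∀ x ∈ Set.Ico a₁ b₁, ind a₂ b₂ x = 0 := fun x hx =>
    (ind_eq_zero_or_ind_eq_zero hdisj x).resolve_left (by simp [ind, hx])
  constructor
  · rintro ⟨-, hpos, hq⟩
    exact ⟨fun x hx => by simpa [hJ₁ x hx] using hpos x hx, hq⟩
  · rintro ⟨hpos, hq⟩
    refine ⟨?_, fun x hx => (hpos x hx).trans (Nat.le_add_right _ _), hq⟩
    rw [Addable, ← max_add_ind_tsub_ind hdisj]
    exact hp.max hq

lemma removable_and_addable_iff (hp : IsRealPyramid p)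
    (hdisj : Set.Ico a₁ b₁ ∩ Set.Ico a₂ b₂ = ∅) :
    Removable p a₁ b₁ ∧ Addable (fun x => p x - ind a₁ b₁ x) a₂ b₂ ↔
      (∀ x ∈ Set.Ico a₁ b₁, 1 ≤ p x) ∧ IsRealPyramid fun x => p x + ind a₂ b₂ x - ind a₁ b₁ x := by
  rw [Addable, tsub_ind_add_ind hdisj]
  constructor
  · rintro ⟨⟨hpos, -⟩, hq⟩
    exact ⟨hpos, hq⟩
  · rintro ⟨hpos, hq⟩
    refine ⟨⟨hpos, ?_⟩, hq⟩
    rw [← min_add_ind_tsub_ind hdisj]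
    exact hp.min hq

lemma not_isRealPyramid_of_adjacent (hp : IsRealPyramid p) (h₁ : a₁ < b₁) (h₂ : a₂ < b₂)
    (hpos : ∀ x ∈ Set.Ico a₁ b₁, 1 ≤ p x) (hadj : b₁ = a₂ ∨ b₂ = a₁) :
    ¬ IsRealPyramid fun x => p x + ind a₂ b₂ x - ind a₁ b₁ x := by
  intro hq
  have hjump := hp.abs_jump_sub_jump_le_one hq
  rcases hadj with rfl | rfl
  · have hpos_left : 1 ≤ Function.leftLim p b₁ := by
      obtain ⟨x, hx, hxJ⟩ := ((hp.eventually_eq_leftLim b₁).and (Ioo_mem_nhdsLT h₁)).exists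
      exact hx ▸ hpos x ⟨hxJ.1.le, hxJ.2⟩
    have hq_left : Function.leftLim (fun x => p x + ind b₁ b₂ x - ind a₁ b₁ x) b₁ =
        Function.leftLim p b₁ - 1 :=
      leftLim_eq_of_eventually_eq <| ((hp.eventually_eq_leftLim b₁).and
        ((eventually_ind_eq_zero_left b₁ b₂).and (eventually_ind_eq_one_left h₁))).mono
        fun x ⟨hpx, h₂x, h₁x⟩ => by simp only [hpx, h₂x, h₁x, add_zero]
    have := hjump b₁
    simp only [jump, hq_left, ind_self_left h₂, ind_self_right, abs_le] at this
    omega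
  · have hpos_b₂ : 1 ≤ p b₂ := hpos b₂ ⟨le_rfl, h₁⟩
    have hq_left : Function.leftLim (fun x => p x + ind a₂ b₂ x - ind b₂ b₁ x) b₂ =
        Function.leftLim p b₂ + 1 :=
      leftLim_eq_of_eventually_eq <| ((hp.eventually_eq_leftLim b₂).and
        ((eventually_ind_eq_one_left h₂).and (eventually_ind_eq_zero_left b₂ b₁))).mono
        fun x ⟨hpx, h₂x, h₁x⟩ => by simp only [hpx, h₂x, h₁x, tsub_zero]
    have := hjump b₂
    simp only [jump, hq_left, ind_self_left h₁, ind_self_right, abs_le] at this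
    omega

end DisjointIntervals

lemma Evec_of_removable {a b : ℝ} {f : ℝ → ℕ} {hf : IsRealPyramid f} (h : Removable f a b) :
    Evec a b ⟨f, hf⟩ = Finsupp.single ⟨fun x => f x - ind a b x, h.2⟩
      (-tK * (-vK) ^ ((f b : ℤ) - f a)) :=
  dif_pos h

lemma Evec_of_not_removable {a b : ℝ} {f : ℝ → ℕ} {hf : IsRealPyramid f}
    (h : ¬ Removable f a b) : Evec a b ⟨f, hf⟩ = 0 :=
  dif_neg h

lemma Fvec_of_addable {a b : ℝ} {f : ℝ → ℕ} {hf : IsRealPyramid f} (h : Addable f a b) :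
    Fvec a b ⟨f, hf⟩ = Finsupp.single ⟨fun x => f x + ind a b x, h⟩
      (tK * (-vK) ^ ((f a : ℤ) - f b)) :=
  dif_pos h

lemma Fvec_of_not_addable {a b : ℝ} {f : ℝ → ℕ} {hf : IsRealPyramid f}
    (h : ¬ Addable f a b) : Fvec a b ⟨f, hf⟩ = 0 :=
  dif_neg h

lemma Eop_single (a b : ℝ) (p : Pyr) (c : K) : Eop a b (Finsupp.single p c) = c • Evec a b p := by
  simp [Eop]

lemma Fop_single (a b : ℝ) (p : Pyr) (c : K) : Fop a b (Finsupp.single p c) = c • Fvec a b p := by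
  simp [Fop]

lemma Eop_Fvec (a₁ b₁ a₂ b₂ : ℝ) {f : ℝ → ℕ} (hf : IsRealPyramid f) :
    Eop a₁ b₁ (Fvec a₂ b₂ ⟨f, hf⟩) =
      if h : Addable f a₂ b₂ ∧ Removable (fun x => f x + ind a₂ b₂ x) a₁ b₁ then
        Finsupp.single ⟨fun x => f x + ind a₂ b₂ x - ind a₁ b₁ x, h.2.2⟩
          (tK * (-vK) ^ ((f a₂ : ℤ) - f b₂) *
            (-tK * (-vK) ^ (((f b₁ + ind a₂ b₂ b₁ : ℕ) : ℤ) - (f a₁ + ind a₂ b₂ a₁ : ℕ))))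
      else 0 := by
  by_cases hA : Addable f a₂ b₂
  · rw [Fvec_of_addable hA]
    -- `Pyr` and `Addable` are not reducible, so `⟨_, hA⟩ : Pyr` only typechecks up to unfolding.
    erw [Eop_single]
    by_cases hR : Removable (fun x => f x + ind a₂ b₂ x) a₁ b₁
    · erw [Evec_of_removable hR, dif_pos ⟨hA, hR⟩, Finsupp.smul_single, smul_eq_mul]
    · erw [Evec_of_not_removable hR, dif_neg (hR ·.2), smul_zero]
  · rw [Fvec_of_not_addable hA, map_zero, dif_neg (hA ·.1)]

lemma Fop_Evec (a₁ b₁ a₂ b₂ : ℝ) {f : ℝ → ℕ} (hf : IsRealPyramid f) :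
    Fop a₂ b₂ (Evec a₁ b₁ ⟨f, hf⟩) =
      if h : Removable f a₁ b₁ ∧ Addable (fun x => f x - ind a₁ b₁ x) a₂ b₂ then
        Finsupp.single ⟨fun x => f x - ind a₁ b₁ x + ind a₂ b₂ x, h.2⟩
          (-tK * (-vK) ^ ((f b₁ : ℤ) - f a₁) *
            (tK * (-vK) ^ (((f a₂ - ind a₁ b₁ a₂ : ℕ) : ℤ) - (f b₂ - ind a₁ b₁ b₂ : ℕ))))
      else 0 := by
  by_cases hR : Removable f a₁ b₁
  · rw [Evec_of_removable hR]
    erw [Fop_single]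
    by_cases hA : Addable (fun x => f x - ind a₁ b₁ x) a₂ b₂
    · erw [Fvec_of_addable hA, dif_pos ⟨hR, hA⟩, Finsupp.smul_single, smul_eq_mul]
    · erw [Fvec_of_not_addable hA, dif_neg (hA ·.2), smul_zero]
  · rw [Evec_of_not_removable hR, map_zero, dif_neg (hR ·.1)]

lemma Eop_Fvec_eq_Fop_Evec {a₁ b₁ a₂ b₂ : ℝ} (h₁ : a₁ < b₁) (h₂ : a₂ < b₂)
    (hdisj : Set.Ico a₁ b₁ ∩ Set.Ico a₂ b₂ = ∅) {f : ℝ → ℕ} (hf : IsRealPyramid f) :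
    Eop a₁ b₁ (Fvec a₂ b₂ ⟨f, hf⟩) = Fop a₂ b₂ (Evec a₁ b₁ ⟨f, hf⟩) := by
  rw [Eop_Fvec, Fop_Evec]
  by_cases hC : (∀ x ∈ Set.Ico a₁ b₁, 1 ≤ f x) ∧
      IsRealPyramid fun x => f x + ind a₂ b₂ x - ind a₁ b₁ x
  · have hsep : b₁ < a₂ ∨ b₂ < a₁ := by
      have hnadj : ¬ (b₁ = a₂ ∨ b₂ = a₁) := fun hadj =>
        not_isRealPyramid_of_adjacent hf h₁ h₂ hC.1 hadj hC.2
      rcases le_or_le_of_Ico_inter_Ico_eq_empty h₁ h₂ hdisj with h | h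
      exacts [Or.inl (h.lt_of_ne fun h' => hnadj (Or.inl h')),
        Or.inr (h.lt_of_ne fun h' => hnadj (Or.inr h'))]
    rw [dif_pos ((addable_and_removable_iff hf hdisj).2 hC),
      dif_pos ((removable_and_addable_iff hf hdisj).2 hC)]
    congr 1
    · exact Subtype.ext (tsub_ind_add_ind hdisj).symm
    · rw [ind_eq_zero_of_separated hsep (Set.left_mem_Icc.2 h₁.le),
        ind_eq_zero_of_separated hsep (Set.right_mem_Icc.2 h₁.le),
        ind_eq_zero_of_separated hsep.symm (Set.left_mem_Icc.2 h₂.le),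
        ind_eq_zero_of_separated hsep.symm (Set.right_mem_Icc.2 h₂.le)]
      simp only [add_zero, tsub_zero]
      ring
  · rw [dif_neg (mt (addable_and_removable_iff hf hdisj).1 hC),
      dif_neg (mt (removable_and_addable_iff hf hdisj).1 hC)]

/-- if `J₁ ∩ J₂ = ∅` then `E_{J₁}` and `F_{J₂}` commute on the Fock space. -/
theorem fock_EF_disjoint_commute (a₁ b₁ a₂ b₂ : ℝ) (h₁ : a₁ < b₁) (h₂ : a₂ < b₂)
    (hdisj : Set.Ico a₁ b₁ ∩ Set.Ico a₂ b₂ = ∅) :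
    Eop a₁ b₁ ∘ₗ Fop a₂ b₂ = Fop a₂ b₂ ∘ₗ Eop a₁ b₁ := by
  refine Finsupp.lhom_ext fun p c => ?_
  rw [LinearMap.comp_apply, LinearMap.comp_apply, Fop_single, Eop_single, map_smul, map_smul]
  exact congrArg _ (Eop_Fvec_eq_Fop_Evec h₁ h₂ hdisj p.2)
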